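/- arXiv:2210.13862 — 2 statements merged into one kernel-verified Lean document; each statement's English description precedes it below -/
import Mathlib

section
/- Define q_r(x) by Σ_{r≥0} q_r(x) t^r = Π_{i=1}^n (1+x_i t)/(1-x_i t) with q_r = 0 for r < 0, and q_r(x,x) by the square of that series. For every integer λ₁ ≥ 0: Σ_{k=0}^{λ₁} (q_{2k+2}(x) q_1(x) − q_{2k+3}(x)) · (q_{2(λ₁−k)+2}(x) q_1(x) − q_{2(λ₁−k)+3}(x)) = (1/4) (q_{2λ₁+4}(x,x) q_2(x,x) − 2 q_{2λ₁+5}(x,x) q_1(x,x) + 2 q_{2λ₁+6}(x,x)). -/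
/-!
Write `Q(t) = ∑ q_r tʳ`. The hypothesis says `Q = N / D` with `N(t) = D(-t)`, hence
`Q(t) Q(-t) = 1`. Bisecting, `Q(t) = E(t²) + t O(t²)` with `E² - t O² = 1`, so `Q²` bisects
into `1 + 2t O²` and `2 E O`. The left-hand side is the coefficient of `tˡ` in `S²`, where
`t S = q₁ E - O`; expanding `(q₁ E - O)²` and replacing `E²` by `1 + t O²` leaves only
coefficients of `O²` and `E O`, that is, of `Q²`.
-/

open Finset PowerSeries

namespace PowerSeries

variable {A : Type*} [CommRing A]

/-- The bisection of `f`: `f(t) = evenPart f (t²) + t · oddPart f (t²)`. -/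
noncomputable def evenPart (f : A⟦X⟧) : A⟦X⟧ := mk fun m => coeff (2 * m) f

noncomputable def oddPart (f : A⟦X⟧) : A⟦X⟧ := mk fun m => coeff (2 * m + 1) f

@[simp] lemma coeff_evenPart (f : A⟦X⟧) (m : ℕ) : coeff m (evenPart f) = coeff (2 * m) f :=
  coeff_mk _ _

@[simp] lemma coeff_oddPart (f : A⟦X⟧) (m : ℕ) : coeff m (oddPart f) = coeff (2 * m + 1) f :=
  coeff_mk _ _

@[simp] lemma constantCoeff_evenPart (f : A⟦X⟧) :
    constantCoeff (evenPart f) = constantCoeff f := by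
  rw [← coeff_zero_eq_constantCoeff_apply, coeff_evenPart, coeff_zero_eq_constantCoeff_apply]

@[simp] lemma constantCoeff_oddPart (f : A⟦X⟧) : constantCoeff (oddPart f) = coeff 1 f := by
  rw [← coeff_zero_eq_constantCoeff_apply, coeff_oddPart]

lemma coeff_two_mul_expand_add_X_mul_expand (a b : A⟦X⟧) (m : ℕ) :
    coeff (2 * m) (expand 2 two_ne_zero a + X * expand 2 two_ne_zero b) = coeff m a := by
  rw [map_add, coeff_expand_mul]
  cases m with
  | zero => simp
  | succ m =>
    rw [show 2 * (m + 1) = 2 * m + 1 + 1 by ring, coeff_succ_X_mul,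
      coeff_expand_of_not_dvd _ _ _ (by omega), add_zero]

lemma coeff_two_mul_add_one_expand_add_X_mul_expand (a b : A⟦X⟧) (m : ℕ) :
    coeff (2 * m + 1) (expand 2 two_ne_zero a + X * expand 2 two_ne_zero b) = coeff m b := by
  rw [map_add, coeff_succ_X_mul, coeff_expand_mul, coeff_expand_of_not_dvd _ _ _ (by omega),
    zero_add]

lemma expand_evenPart_add_X_mul_expand_oddPart (f : A⟦X⟧) :
    expand 2 two_ne_zero (evenPart f) + X * expand 2 two_ne_zero (oddPart f) = f := by
  ext r
  obtain ⟨m, rfl | rfl⟩ := Nat.even_or_odd' r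
  · rw [coeff_two_mul_expand_add_X_mul_expand, coeff_evenPart]
  · rw [coeff_two_mul_add_one_expand_add_X_mul_expand, coeff_oddPart]

lemma rescale_neg_one_eq_expand_evenPart_sub (f : A⟦X⟧) :
    rescale (-1) f
      = expand 2 two_ne_zero (evenPart f) - X * expand 2 two_ne_zero (oddPart f) := by
  rw [sub_eq_add_neg, ← mul_neg, ← map_neg]
  ext r
  obtain ⟨m, rfl | rfl⟩ := Nat.even_or_odd' r
  · rw [coeff_two_mul_expand_add_X_mul_expand, coeff_evenPart, coeff_rescale, pow_mul]
    simp
  · rw [coeff_two_mul_add_one_expand_add_X_mul_expand, map_neg, coeff_oddPart, coeff_rescale,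
      pow_succ, pow_mul]
    simp

lemma expand_two_injective : Function.Injective (expand 2 two_ne_zero : A⟦X⟧ → A⟦X⟧) :=
  fun a b h => ext fun m => by
    simpa only [coeff_expand_mul] using congrArg (coeff (2 * m)) h

lemma evenPart_sq_sub_X_mul_oddPart_sq {f : A⟦X⟧} (hf : f * rescale (-1) f = 1) :
    evenPart f ^ 2 - X * oddPart f ^ 2 = 1 := by
  apply expand_two_injective
  rw [map_one, ← hf, rescale_neg_one_eq_expand_evenPart_sub]
  simp only [map_sub, map_mul, map_pow, expand_X]
  linear_combination (expand 2 two_ne_zero (evenPart f) - X * expand 2 two_ne_zero (oddPart f))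
    * expand_evenPart_add_X_mul_expand_oddPart f

lemma sq_eq_expand_add_X_mul_expand {f : A⟦X⟧} (hf : f * rescale (-1) f = 1) :
    f ^ 2 = expand 2 two_ne_zero (1 + 2 * X * oddPart f ^ 2)
      + X * expand 2 two_ne_zero (2 * (evenPart f * oddPart f)) := by
  have h := congrArg (expand 2 two_ne_zero) (evenPart_sq_sub_X_mul_oddPart_sq hf)
  simp only [map_sub, map_add, map_mul, map_pow, map_one, map_ofNat, expand_X] at h ⊢
  linear_combination h - (f + expand 2 two_ne_zero (evenPart f)
    + X * expand 2 two_ne_zero (oddPart f)) * expand_evenPart_add_X_mul_expand_oddPart f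

lemma coeff_sq_two_mul_add_two {f : A⟦X⟧} (hf : f * rescale (-1) f = 1) (m : ℕ) :
    coeff (2 * m + 2) (f ^ 2) = 2 * coeff m (oddPart f ^ 2) := by
  rw [sq_eq_expand_add_X_mul_expand hf, show 2 * m + 2 = 2 * (m + 1) by ring,
    coeff_two_mul_expand_add_X_mul_expand, map_add, coeff_one, if_neg m.succ_ne_zero, zero_add,
    mul_assoc, ← map_ofNat C 2, coeff_C_mul, coeff_succ_X_mul]

lemma coeff_sq_two_mul_add_one {f : A⟦X⟧} (hf : f * rescale (-1) f = 1) (m : ℕ) :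
    coeff (2 * m + 1) (f ^ 2) = 2 * coeff m (evenPart f * oddPart f) := by
  rw [sq_eq_expand_add_X_mul_expand hf, coeff_two_mul_add_one_expand_add_X_mul_expand,
    ← map_ofNat C 2, coeff_C_mul]

/-- Its `k`-th coefficient is the Jacobi–Trudi determinant `S_{(2k+2,1)}` of `f = ∑ q_r tʳ`. -/
noncomputable def hookSeries (f : A⟦X⟧) : A⟦X⟧ :=
  mk fun k => coeff (2 * k + 2) f * coeff 1 f - coeff (2 * k + 3) f

lemma X_mul_hookSeries {f : A⟦X⟧} (h0 : constantCoeff f = 1) :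
    X * hookSeries f = C (coeff 1 f) * evenPart f - oddPart f := by
  ext r
  cases r with
  | zero => simp [h0]
  | succ k =>
    rw [coeff_succ_X_mul, hookSeries, coeff_mk, map_sub, coeff_C_mul, coeff_evenPart,
      coeff_oddPart, mul_comm]
    ring_nf

theorem four_mul_sum_hook_mul_hook {f : A⟦X⟧} (hf : f * rescale (-1) f = 1)
    (h0 : constantCoeff f = 1) (l : ℕ) :
    4 * ∑ k ∈ range (l + 1),
        (coeff (2 * k + 2) f * coeff 1 f - coeff (2 * k + 3) f) *
          (coeff (2 * (l - k) + 2) f * coeff 1 f - coeff (2 * (l - k) + 3) f)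
      = coeff (2 * l + 4) (f ^ 2) * coeff 2 (f ^ 2)
        - 2 * coeff (2 * l + 5) (f ^ 2) * coeff 1 (f ^ 2) + 2 * coeff (2 * l + 6) (f ^ 2) := by
  set e := evenPart f
  set o := oddPart f
  set a := coeff 1 f
  have hsum : ∑ k ∈ range (l + 1),
        (coeff (2 * k + 2) f * a - coeff (2 * k + 3) f) *
          (coeff (2 * (l - k) + 2) f * a - coeff (2 * (l - k) + 3) f)
      = coeff l (hookSeries f * hookSeries f) := by
    rw [coeff_mul, Nat.sum_antidiagonal_eq_sum_range_succ
      (fun i j => coeff i (hookSeries f) * coeff j (hookSeries f))]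
    simp only [hookSeries, coeff_mk, a]
  have hsq : X ^ 2 * (hookSeries f * hookSeries f)
      = C (a ^ 2) * (1 + X * o ^ 2) - C (2 * a) * (e * o) + o ^ 2 := by
    have hX := X_mul_hookSeries h0
    simp only [map_pow, map_mul, map_ofNat]
    linear_combination (X * hookSeries f + C a * e - o) * hX
      + C a ^ 2 * evenPart_sq_sub_X_mul_oddPart_sq hf
  have hcoeff := congrArg (coeff (l + 2)) hsq
  rw [coeff_X_pow_mul, map_add, map_sub, coeff_C_mul, coeff_C_mul, map_add, coeff_one,
    if_neg (by omega), zero_add, coeff_succ_X_mul] at hcoeff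
  have h2 : coeff 2 (f ^ 2) = 2 * a ^ 2 := by
    simpa [o, a, coeff_zero_eq_constantCoeff_apply] using coeff_sq_two_mul_add_two hf 0
  have h1 : coeff 1 (f ^ 2) = 2 * a := by
    simpa [e, o, a, coeff_zero_eq_constantCoeff_apply, h0] using coeff_sq_two_mul_add_one hf 0
  rw [h2, h1, show 2 * l + 4 = 2 * (l + 1) + 2 by ring, show 2 * l + 6 = 2 * (l + 2) + 2 by ring,
    show 2 * l + 5 = 2 * (l + 2) + 1 by ring, coeff_sq_two_mul_add_two hf,
    coeff_sq_two_mul_add_two hf, coeff_sq_two_mul_add_one hf, hsum, hcoeff]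
  ring

lemma rescale_neg_one_one_sub_C_mul_X (a : A) :
    rescale (-1) (1 - C a * X) = 1 + C a * X := by
  ext n
  rcases n with _ | _ | n <;> simp [coeff_rescale, coeff_one]

lemma mul_rescale_neg_one_self_eq_one_of_mul_eq_rescale {Q D : A⟦X⟧} (hD : IsUnit D)
    (h : Q * D = rescale (-1) D) : Q * rescale (-1) Q = 1 := by
  have h' : rescale (-1) Q * rescale (-1) D = D := by
    simpa [rescale_rescale] using congrArg (rescale (-1)) h
  refine (hD.mul (hD.map (rescale (-1)))).mul_right_cancel ?_
  linear_combination rescale (-1) Q * rescale (-1) D * h + rescale (-1) D * h'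

lemma constantCoeff_eq_one_of_mul_eq_rescale {Q D : A⟦X⟧} (hD : IsUnit D)
    (h : Q * D = rescale (-1) D) : constantCoeff Q = 1 := by
  have h0 := congrArg constantCoeff h
  rw [map_mul, ← coeff_zero_eq_constantCoeff_apply (rescale _ D), coeff_rescale, pow_zero,
    one_mul, coeff_zero_eq_constantCoeff_apply] at h0
  exact ((hD.map constantCoeff).mul_eq_right).1 h0

end PowerSeries

theorem mny_n_two_len_one_even_general (n : ℕ)
    (q qq : ℕ → MvPolynomial (Fin n) ℚ)
    (hq : (PowerSeries.mk fun r => q r) *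
        ∏ i : Fin n, (1 - PowerSeries.C (R := MvPolynomial (Fin n) ℚ) (MvPolynomial.X i) *
          PowerSeries.X)
      = ∏ i : Fin n, (1 + PowerSeries.C (R := MvPolynomial (Fin n) ℚ) (MvPolynomial.X i) *
          PowerSeries.X))
    (hqq : (PowerSeries.mk fun r => qq r) *
        (∏ i : Fin n, (1 - PowerSeries.C (R := MvPolynomial (Fin n) ℚ) (MvPolynomial.X i) *
          PowerSeries.X)) ^ 2
      = (∏ i : Fin n, (1 + PowerSeries.C (R := MvPolynomial (Fin n) ℚ) (MvPolynomial.X i) *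
          PowerSeries.X)) ^ 2)
    (l : ℕ) :
    ∑ k ∈ Finset.range (l + 1),
        (q (2 * k + 2) * q 1 - q (2 * k + 3)) *
          (q (2 * (l - k) + 2) * q 1 - q (2 * (l - k) + 3))
      = MvPolynomial.C ((1 : ℚ) / 4) *
          (qq (2 * l + 4) * qq 2 - 2 * qq (2 * l + 5) * qq 1 + 2 * qq (2 * l + 6)) := by
  set D := ∏ i : Fin n, (1 - C (MvPolynomial.X (R := ℚ) i) * X)
  have hD : IsUnit D := by simp [D, isUnit_iff_constantCoeff]
  have hQ : mk q * D = rescale (-1) D := by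
    simp only [D, hq, map_prod, rescale_neg_one_one_sub_C_mul_X]
  have hqq' : mk qq = mk q ^ 2 :=
    (hD.pow 2).mul_right_cancel (by rw [hqq, ← hq, mul_pow])
  have key := four_mul_sum_hook_mul_hook
    (mul_rescale_neg_one_self_eq_one_of_mul_eq_rescale hD hQ)
    (constantCoeff_eq_one_of_mul_eq_rescale hD hQ) l
  simp only [← hqq', coeff_mk] at key
  rw [← key, ← mul_assoc, ← map_ofNat MvPolynomial.C 4, ← map_mul]
  norm_num

/-- The `n = 2`, `ℓ(λ) ≤ 1` case (even version) of the Mizukawa–Nakajima–Yamada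
conjecture, written out via the Jacobi–Trudi determinants
`S_{(2k+2,1)} = q_{2k+2} q_1 - q_{2k+3}` and the two-row Schur `Q`-function. -/
theorem mny_n_two_len_one_even (n : ℕ) (hn : 1 ≤ n)
    (q qq : ℕ → MvPolynomial (Fin n) ℚ)
    (hq : (PowerSeries.mk fun r => q r) *
        ∏ i : Fin n, (1 - PowerSeries.C (R := MvPolynomial (Fin n) ℚ) (MvPolynomial.X i) *
          PowerSeries.X)
      = ∏ i : Fin n, (1 + PowerSeries.C (R := MvPolynomial (Fin n) ℚ) (MvPolynomial.X i) *
          PowerSeries.X))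
    (hqq : (PowerSeries.mk fun r => qq r) *
        (∏ i : Fin n, (1 - PowerSeries.C (R := MvPolynomial (Fin n) ℚ) (MvPolynomial.X i) *
          PowerSeries.X)) ^ 2
      = (∏ i : Fin n, (1 + PowerSeries.C (R := MvPolynomial (Fin n) ℚ) (MvPolynomial.X i) *
          PowerSeries.X)) ^ 2)
    (l : ℕ) :
    ∑ k ∈ Finset.range (l + 1),
        (q (2 * k + 2) * q 1 - q (2 * k + 3)) *
          (q (2 * (l - k) + 2) * q 1 - q (2 * (l - k) + 3))
      = MvPolynomial.C ((1 : ℚ) / 4) *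
          (qq (2 * l + 4) * qq 2 - 2 * qq (2 * l + 5) * qq 1 + 2 * qq (2 * l + 6)) :=
  mny_n_two_len_one_even_general n q qq hq hqq l
end

section
/- Let n ≥ 1, Δ = (n, n−1, …, 1), δ = (n−1, …, 1, 0), and for each partition λ of length at most n define s_λ(y²) as the Schur polynomial in y₁²,…,y_n². Then a_δ(y²) · Σ_{μ ∈ P^{(n)}} s_μ(y²) S_{2μ+Δ}(x) = Σ_{u ∈ (ℤ_{≥0})^n} (Π_{j=1}^n q_{2u_j + 1 − (n−j)}(x)) · a_u(y²), where a_α(y) = Σ_{σ ∈ S_n} sgn(σ) σ(y^α) is the antisymmetrization and S_λ(x) = det(q_{λ_i−i+j}(x)) is the 2-reduced Schur polynomial with q_r = 0 for r < 0. -/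
open Finset

/-- The antisymmetrization `a_α(y) = ∑_{σ ∈ S_k} sgn(σ) ∏ᵢ y_{σ(i)}^{αᵢ}`. -/
noncomputable def aalt (k : ℕ) (α : Fin k → ℕ) : MvPolynomial (Fin k) ℚ :=
  ∑ σ : Equiv.Perm (Fin k), ((Equiv.Perm.sign σ : ℤ) : MvPolynomial (Fin k) ℚ) *
    ∏ i, MvPolynomial.X (σ i) ^ α i

/-- The staircase `δ = (k-1, k-2, …, 1, 0)`. -/
def dlt (k : ℕ) : Fin k → ℕ := fun i => k - 1 - i

/-- The `2`-reduced Schur polynomial `S_λ(x) = det (q_{λᵢ - i + j})_{1 ≤ i,j ≤ n}`. -/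
noncomputable def Sred (n : ℕ) (q : ℤ → MvPolynomial (Fin n) ℚ) (f : Fin n → ℕ) :
    MvPolynomial (Fin n) ℚ :=
  Matrix.det (Matrix.of fun i j : Fin n => q (((f i : ℤ) + (j : ℕ)) - (i : ℕ)))

/-- The partitions of `d` of length at most `n`, encoded as antitone functions
`Fin n → ℕ` of total sum `d`. -/
def PLen (n d : ℕ) : Finset (Fin n → ℕ) :=
  (Fintype.piFinset fun _ => Finset.range (d + 1)).filter
    fun f => (∀ i j : Fin n, i ≤ j → f j ≤ f i) ∧ ∑ i, f i = d

/-- The antisymmetrization evaluated at squared variables,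
`a_α(y²) = ∑_{σ ∈ S_k} sgn(σ) ∏ᵢ y_{σ(i)}^{2αᵢ}`. -/
noncomputable def aaltSq (k : ℕ) (α : Fin k → ℕ) : MvPolynomial (Fin k) ℚ :=
  ∑ σ : Equiv.Perm (Fin k), ((Equiv.Perm.sign σ : ℤ) : MvPolynomial (Fin k) ℚ) *
    ∏ i, MvPolynomial.X (σ i) ^ (2 * α i)

/-- All vectors `u ∈ (ℤ_{≥0})^n` of total sum `m`. -/
def Vecs (n m : ℕ) : Finset (Fin n → ℕ) :=
  (Fintype.piFinset fun _ => Finset.range (m + 1)).filter fun f => ∑ i, f i = m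

/-! Since `a_δ s_μ = a_{μ+δ}`, the left side is `∑_μ S_{2μ+Δ}(x) a_{μ+δ}(y²)`. Expanding the
determinant `S_{2μ+Δ}` over permutations `τ` and absorbing `sgn τ` via
`a_{(μ+δ)∘τ} = sgn τ · a_{μ+δ}` turns it into a sum over the vectors `u = (μ+δ)∘τ`. These are
exactly the vectors with distinct entries, each reached once (sort `u` decreasingly and subtract
`δ`), while a vector with a repeated entry contributes nothing because then `a_u = 0`. -/

open MvPolynomial Equiv

lemma aalt_eq_det (k : ℕ) (α : Fin k → ℕ) :
    aalt k α = (Matrix.of fun i j : Fin k => (X i : MvPolynomial (Fin k) ℚ) ^ α j).det := by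
  simp [aalt, Matrix.det_apply']

lemma aalt_comp_perm (k : ℕ) (α : Fin k → ℕ) (τ : Perm (Fin k)) :
    aalt k (α ∘ τ) = ((Perm.sign τ : ℤ) : MvPolynomial (Fin k) ℚ) * aalt k α := by
  rw [aalt_eq_det, aalt_eq_det, ← Matrix.det_permute']
  rfl

lemma aalt_eq_zero_of_not_injective {k : ℕ} {α : Fin k → ℕ} (hα : ¬ Function.Injective α) :
    aalt k α = 0 := by
  obtain ⟨i, j, hij, hne⟩ : ∃ i j, α i = α j ∧ i ≠ j := by
    simpa [Function.Injective] using hα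
  rw [aalt_eq_det]
  exact Matrix.det_zero_of_column_eq hne fun l => by simp [hij]

lemma aaltSq_comp_perm (k : ℕ) (α : Fin k → ℕ) (τ : Perm (Fin k)) :
    aaltSq k (α ∘ τ) = ((Perm.sign τ : ℤ) : MvPolynomial (Fin k) ℚ) * aaltSq k α :=
  aalt_comp_perm k (fun i => 2 * α i) τ

lemma aaltSq_eq_zero_of_not_injective {k : ℕ} {α : Fin k → ℕ} (hα : ¬ Function.Injective α) :
    aaltSq k α = 0 :=
  aalt_eq_zero_of_not_injective fun h => hα fun i j hij => h (by simp [hij])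

lemma aaltSq_eq_aeval_aalt (k : ℕ) (α : Fin k → ℕ) :
    aaltSq k α = aeval (fun i => (X i : MvPolynomial (Fin k) ℚ) ^ 2) (aalt k α) := by
  simp [aalt, aaltSq, pow_mul]

lemma aaltSq_mul_aeval_sq {k : ℕ} {α β : Fin k → ℕ} {s : MvPolynomial (Fin k) ℚ}
    (h : aalt k α * s = aalt k β) :
    aaltSq k α * aeval (fun i => (X i : MvPolynomial (Fin k) ℚ) ^ 2) s = aaltSq k β := by
  rw [aaltSq_eq_aeval_aalt, aaltSq_eq_aeval_aalt, ← map_mul, h]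

lemma StrictAnti.add_sub_le {k : ℕ} {w : Fin k → ℕ} (hw : StrictAnti w) {i j : Fin k}
    (hij : i ≤ j) : w j + ((j : ℕ) - i) ≤ w i := by
  have hcard := Finset.card_le_card_of_injOn w
    (fun l hl => by
      simp only [Finset.coe_Icc, Set.mem_Icc] at hl ⊢
      exact ⟨hw.antitone hl.2, hw.antitone hl.1⟩)
    hw.injective.injOn (s := Finset.Icc i j) (t := Finset.Icc (w j) (w i))
  simp only [Fin.card_Icc, Nat.card_Icc] at hcard
  omega

lemma sum_dlt (n : ℕ) : ∑ i : Fin n, dlt n i = n * (n - 1) / 2 := by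
  rw [show dlt n = fun i : Fin n => n - 1 - (i : ℕ) from rfl,
    Fin.sum_univ_eq_sum_range (fun r => n - 1 - r) n, Finset.sum_range_reflect (fun r => r) n]
  exact Finset.sum_range_id n

lemma mem_PLen {n d : ℕ} {f : Fin n → ℕ} :
    f ∈ PLen n d ↔ Antitone f ∧ ∑ i, f i = d := by
  rw [PLen, Finset.mem_filter, Fintype.mem_piFinset]
  refine ⟨fun h => h.2, fun h => ⟨fun i => Finset.mem_range_succ_iff.mpr ?_, h⟩⟩
  exact h.2 ▸ Finset.single_le_sum (by simp) (mem_univ i)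

lemma mem_Vecs {n m : ℕ} {f : Fin n → ℕ} : f ∈ Vecs n m ↔ ∑ i, f i = m := by
  rw [Vecs, Finset.mem_filter, Fintype.mem_piFinset]
  refine ⟨fun h => h.2, fun h => ⟨fun i => Finset.mem_range_succ_iff.mpr ?_, h⟩⟩
  exact h ▸ Finset.single_le_sum (by simp) (mem_univ i)

lemma Antitone.strictAnti_add_dlt {n : ℕ} {f : Fin n → ℕ} (hf : Antitone f) :
    StrictAnti fun i => f i + dlt n i := by
  intro i j hij
  have := hf hij.le
  simp only [dlt]
  omega

lemma StrictAnti.exists_antitone_add_dlt_eq {n : ℕ} {w : Fin n → ℕ} (hw : StrictAnti w) :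
    ∃ f : Fin n → ℕ, Antitone f ∧ (fun i => f i + dlt n i) = w := by
  have hdlt : ∀ i, dlt n i ≤ w i := fun i => by
    have hi := i.isLt
    have := hw.add_sub_le (i := i) (j := ⟨n - 1, by omega⟩) (Fin.le_def.mpr (by simp; omega))
    simp only [dlt] at this ⊢
    omega
  refine ⟨fun i => w i - dlt n i, fun i j hij => ?_, funext fun i => Nat.sub_add_cancel (hdlt i)⟩
  have := hw.add_sub_le hij
  have := hdlt j
  simp only [dlt] at *
  omega

lemma exists_perm_strictAnti_comp {α : Type*} [LinearOrder α] {k : ℕ} {u : Fin k → α}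
    (hu : Function.Injective u) : ∃ σ : Perm (Fin k), StrictAnti (u ∘ σ) :=
  ⟨Fin.revPerm.trans (Tuple.sort u),
    ((Tuple.monotone_sort u).comp_antitone Fin.rev_anti).strictAnti_of_injective
      (hu.comp (Fin.revPerm.trans (Tuple.sort u)).injective)⟩

lemma eq_and_eq_of_add_dlt_comp_eq {n : ℕ} {f g : Fin n → ℕ} {τ ρ : Perm (Fin n)}
    (hf : Antitone f) (hg : Antitone g)
    (h : (fun i => f i + dlt n i) ∘ τ = (fun i => g i + dlt n i) ∘ ρ) : f = g ∧ τ = ρ := by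
  set u := (fun i => f i + dlt n i) ∘ τ
  have hfu : (fun i => f i + dlt n i) = u ∘ ⇑τ⁻¹ := by ext; simp [u]
  have hgu : (fun i => g i + dlt n i) = u ∘ ⇑ρ⁻¹ := by ext; simp [h]
  have hsorted : (fun i => f i + dlt n i) = fun i => g i + dlt n i := by
    rw [hfu, hgu]
    exact Tuple.unique_antitone (hfu ▸ hf.strictAnti_add_dlt.antitone)
      (hgu ▸ hg.strictAnti_add_dlt.antitone)
  obtain rfl : f = g := funext fun i => Nat.add_right_cancel (congrFun hsorted i)
  exact ⟨rfl, DFunLike.coe_injective (hf.strictAnti_add_dlt.injective.comp_left h)⟩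

open Classical in
lemma sum_PLen_sum_perm_eq_sum_injective {M : Type*} [AddCommMonoid M] (n d : ℕ)
    (F : (Fin n → ℕ) → M) :
    ∑ f ∈ PLen n d, ∑ τ : Perm (Fin n), F ((fun i => f i + dlt n i) ∘ τ)
      = ∑ u ∈ Vecs n (d + n * (n - 1) / 2) with Function.Injective u, F u := by
  rw [← Finset.sum_product']
  refine Finset.sum_bij (fun p _ => (fun i => p.1 i + dlt n i) ∘ p.2) ?_ ?_ ?_ fun _ _ => rfl
  · rintro ⟨f, τ⟩ hp
    obtain ⟨hf, hsum⟩ := mem_PLen.mp (Finset.mem_product.mp hp).1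
    refine Finset.mem_filter.mpr ⟨mem_Vecs.mpr ?_, hf.strictAnti_add_dlt.injective.comp τ.injective⟩
    simp only [Function.comp_apply, Equiv.sum_comp τ (fun i => f i + dlt n i),
      Finset.sum_add_distrib, hsum, sum_dlt]
  · rintro ⟨f, τ⟩ hp ⟨g, ρ⟩ hp' heq
    obtain ⟨rfl, rfl⟩ := eq_and_eq_of_add_dlt_comp_eq (mem_PLen.mp (Finset.mem_product.mp hp).1).1
      (mem_PLen.mp (Finset.mem_product.mp hp').1).1 heq
    rfl
  · intro u hu
    obtain ⟨hsum, hu⟩ := Finset.mem_filter.mp hu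
    obtain ⟨σ, hσ⟩ := exists_perm_strictAnti_comp hu
    obtain ⟨f, hf, hfσ⟩ := hσ.exists_antitone_add_dlt_eq
    have hfsum : ∑ i, f i = d := by
      have := congrArg (fun v : Fin n → ℕ => ∑ i, v i) hfσ
      simp only [Finset.sum_add_distrib, sum_dlt, Function.comp_apply,
        Equiv.sum_comp σ u, mem_Vecs.mp hsum] at this
      omega
    refine ⟨(f, σ⁻¹), Finset.mem_product.mpr ⟨mem_PLen.mpr ⟨hf, hfsum⟩, mem_univ _⟩, ?_⟩
    simp [hfσ, Function.comp_assoc]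

lemma Sred_two_mul_add_eq_sum_perm (n : ℕ) (q : ℤ → MvPolynomial (Fin n) ℚ) (f : Fin n → ℕ) :
    Sred n q (fun i => 2 * f i + (n - (i : ℕ)))
      = ∑ τ : Perm (Fin n), ((Perm.sign τ : ℤ) : MvPolynomial (Fin n) ℚ) *
          ∏ j, q ((2 * (((fun i => f i + dlt n i) ∘ τ) j : ℤ) + (j : ℕ) + 2) - n) := by
  rw [Sred, Matrix.det_apply']
  refine Finset.sum_congr rfl fun τ _ => congrArg _ (Finset.prod_congr rfl fun j _ => ?_)
  have := (τ j).isLt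
  simp only [Matrix.of_apply, Function.comp_apply, dlt]
  congr 1
  push_cast
  omega

lemma rename_Sred_mul_rename_aaltSq (n : ℕ) (q : ℤ → MvPolynomial (Fin n) ℚ) (f : Fin n → ℕ) :
    rename Sum.inl (Sred n q fun i => 2 * f i + (n - (i : ℕ))) *
        rename Sum.inr (aaltSq n fun i => f i + dlt n i)
      = ∑ τ : Perm (Fin n),
          rename Sum.inl (∏ j, q ((2 * (((fun i => f i + dlt n i) ∘ τ) j : ℤ) + (j : ℕ) + 2) - n)) *
            rename (Sum.inr : Fin n → Fin n ⊕ Fin n) (aaltSq n ((fun i => f i + dlt n i) ∘ τ)) := by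
  rw [Sred_two_mul_add_eq_sum_perm, map_sum, Finset.sum_mul]
  refine Finset.sum_congr rfl fun τ _ => ?_
  rw [aaltSq_comp_perm]
  rcases Int.units_eq_one_or (Perm.sign τ) with h | h <;> simp [h]

theorem adelta_mul_sum_schur_Sred_general (n : ℕ)
    (q : ℤ → MvPolynomial (Fin n) ℚ)
    (S : (Fin n → ℕ) → MvPolynomial (Fin n) ℚ)
    (hS : ∀ f : Fin n → ℕ, aalt n (dlt n) * S f = aalt n fun i => f i + dlt n i)
    (d : ℕ) :
    MvPolynomial.rename (Sum.inr : Fin n → Fin n ⊕ Fin n) (aaltSq n (dlt n)) *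
        ∑ f ∈ PLen n d,
          MvPolynomial.rename (Sum.inr : Fin n → Fin n ⊕ Fin n)
              (MvPolynomial.aeval (fun i => (MvPolynomial.X i) ^ 2) (S f)) *
            MvPolynomial.rename (Sum.inl : Fin n → Fin n ⊕ Fin n)
              (Sred n q fun i => 2 * f i + (n - (i : ℕ)))
      = ∑ u ∈ Vecs n (d + n * (n - 1) / 2),
          MvPolynomial.rename (Sum.inl : Fin n → Fin n ⊕ Fin n)
              (∏ j : Fin n, q ((2 * (u j : ℤ) + (j : ℕ) + 2) - n)) *
            MvPolynomial.rename (Sum.inr : Fin n → Fin n ⊕ Fin n) (aaltSq n u) := by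
  classical
  have hterm (f : Fin n → ℕ) :
      rename Sum.inr (aaltSq n (dlt n)) *
          (rename Sum.inr (aeval (fun i => X i ^ 2) (S f)) *
            rename Sum.inl (Sred n q fun i => 2 * f i + (n - (i : ℕ))))
        = rename Sum.inl (Sred n q fun i => 2 * f i + (n - (i : ℕ))) *
            rename Sum.inr (aaltSq n fun i => f i + dlt n i) := by
    rw [← mul_assoc, ← map_mul, aaltSq_mul_aeval_sq (hS f), mul_comm]
  simp only [Finset.mul_sum, hterm, rename_Sred_mul_rename_aaltSq,
    sum_PLen_sum_perm_eq_sum_injective n d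
      (fun u => rename Sum.inl (∏ j : Fin n, q ((2 * (u j : ℤ) + (j : ℕ) + 2) - n)) *
        rename (Sum.inr : Fin n → Fin n ⊕ Fin n) (aaltSq n u))]
  refine Finset.sum_filter_of_ne fun u _ hu => ?_
  by_contra hinj
  simp [aaltSq_eq_zero_of_not_injective hinj] at hu

/-- `a_δ(y²) · ∑_{μ ∈ P⁽ⁿ⁾} s_μ(y²) S_{2μ+Δ}(x)
  = ∑_{u ∈ (ℤ_{≥0})ⁿ} (∏ⱼ q_{2uⱼ+1-(n-j)}(x)) a_u(y²)`,
stated degreewise: both sides are graded by `|μ|` resp. `|u| - |δ|` (equivalently by the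
`y`-degree), and the degree-`d` parts are equated for every `d`.  Here `x` and `y` are two
independent sets of `n` variables (the `x`-variables are `Sum.inl`, the `y`-variables
`Sum.inr`), `S` is the family of Schur polynomials characterized by `a_δ · s_μ = a_{μ+δ}`,
`Δ = (n, …, 1)`, and `q` is characterized by its generating function. -/
theorem adelta_mul_sum_schur_Sred (n : ℕ) (hn : 1 ≤ n)
    (q : ℤ → MvPolynomial (Fin n) ℚ)
    (hneg : ∀ r : ℤ, r < 0 → q r = 0)
    (hq : (PowerSeries.mk fun r : ℕ => q r) *
        ∏ i : Fin n, (1 - PowerSeries.C (MvPolynomial.X i : MvPolynomial (Fin n) ℚ) *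
          PowerSeries.X)
      = ∏ i : Fin n, (1 + PowerSeries.C (MvPolynomial.X i : MvPolynomial (Fin n) ℚ) *
          PowerSeries.X))
    (S : (Fin n → ℕ) → MvPolynomial (Fin n) ℚ)
    (hS : ∀ f : Fin n → ℕ, aalt n (dlt n) * S f = aalt n fun i => f i + dlt n i)
    (d : ℕ) :
    MvPolynomial.rename (Sum.inr : Fin n → Fin n ⊕ Fin n) (aaltSq n (dlt n)) *
        ∑ f ∈ PLen n d,
          MvPolynomial.rename (Sum.inr : Fin n → Fin n ⊕ Fin n)
              (MvPolynomial.aeval (fun i => (MvPolynomial.X i) ^ 2) (S f)) *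
            MvPolynomial.rename (Sum.inl : Fin n → Fin n ⊕ Fin n)
              (Sred n q fun i => 2 * f i + (n - (i : ℕ)))
      = ∑ u ∈ Vecs n (d + n * (n - 1) / 2),
          MvPolynomial.rename (Sum.inl : Fin n → Fin n ⊕ Fin n)
              (∏ j : Fin n, q ((2 * (u j : ℤ) + (j : ℕ) + 2) - n)) *
            MvPolynomial.rename (Sum.inr : Fin n → Fin n ⊕ Fin n) (aaltSq n u) :=
  adelta_mul_sum_schur_Sred_general n q S hS d
end
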